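/- Let Δ be a Jordan derivation of R = R_n(K,J) (n ≥ 4, K 2-torsion free) whose matrices Δ(e_{i+1,i}) have zero i-th columns and zero (i+1,1) entries. Then for 1 < i < n and x ∈ K, Δ(x e_{i,1}) = Δ^{i,1}_{i,1}(x) e_{i,1} + Δ^{i,1}_{n,1}(x) e_{n,1}, i.e., Δ(x e_{i,1}) is supported on positions (i,1) and (n,1). -/

import Mathlib

open Matrix

/-- `R_n(K,J)`: the non-unital subring of `n × n` matrices over `K` whose entries on and
above the main diagonal lie in the two-sided ideal `J`. -/
def Rset (n : ℕ) (K : Type) [Ring K] (J : TwoSidedIdeal K) :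
    NonUnitalSubring (Matrix (Fin n) (Fin n) K) where
  carrier := {M | ∀ i j : Fin n, i ≤ j → M i j ∈ J}
  zero_mem' := by intro i j _; simp [J.zero_mem]
  add_mem' := by intro a b ha hb i j h; exact J.add_mem (ha i j h) (hb i j h)
  neg_mem' := by intro a ha i j h; exact J.neg_mem (ha i j h)
  mul_mem' := by
    intro a b ha hb i j h
    show (∑ k, a i k * b k j) ∈ J
    refine J.finsetSum_mem _ _ fun k _ => ?_
    rcases le_or_gt i k with hik | hik
    · exact J.mul_mem_right _ _ (ha i k hik)
    · exact J.mul_mem_left _ _ (hb k j (le_trans hik.le h))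

lemma stdBasis_mem {n : ℕ} {K : Type} [Ring K] {J : TwoSidedIdeal K}
    {i j : Fin n} {y : K} (h : i ≤ j → y ∈ J) :
    Matrix.single i j y ∈ Rset n K J := by
  intro a b hab
  rw [Matrix.single]
  by_cases hc : i = a ∧ j = b
  · obtain ⟨rfl, rfl⟩ := hc
    simpa using h hab
  · simp [Matrix.of_apply, if_neg hc, J.zero_mem]

lemma stdBasis_mem_lower {n : ℕ} {K : Type} [Ring K] {J : TwoSidedIdeal K}
    {i j : Fin n} (h : j < i) (y : K) :
    Matrix.single i j y ∈ Rset n K J :=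
  stdBasis_mem fun hle => absurd hle (not_le.mpr h)

/-!
Indices are zero-based: the claim concerns `Δ (x e_{r,0})` for `1 ≤ r ≤ n - 2`.

Every step reads entries off the Jordan identity for a pair of strictly lower matrix units.
When `e_{u,v} e_{p,q} = e_{p,q} e_{u,v} = 0` its left side is `Δ 0 = 0`, which gives a linear
relation between the entries of `Δ (x e_{u,v})` and `Δ e_{p,q}`; when `m < q < p` the Jordan
product of `x e_{q,m}` and `e_{p,q}` is `x e_{p,m}`, which expresses `Δ (x e_{p,m})` through
`Δ (x e_{q,m})` and `Δ e_{p,q}`. Relations of the form `a + a = 0` are resolved by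
2-torsion-freeness. For `r = 1` the entries of `Δ (x e_{1,0})` are killed one region at a time
using `e_{1,0}, e_{2,0}, e_{2,1}, e_{3,0}, …` and the vanishing columns of `Δ e_{c+1,c}`; the
step from `r` to `r + 1` uses `x e_{r+1,0} = x e_{r,0} ∘ e_{r+1,r}`, where the only new term,
`x` times row `0` of `Δ e_{r+1,r}`, is shown to vanish with the help of `e_{r+2,r}`.
-/

structure IsJordanDerivation {R : Type*} [NonUnitalNonAssocRing R] (Δ : R → R) : Prop where
  map_add : ∀ a b, Δ (a + b) = Δ a + Δ b
  map_jordan : ∀ a b, Δ (a * b + b * a) = Δ a * b + b * Δ a + a * Δ b + Δ b * a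

theorem IsJordanDerivation.map_zero {R : Type*} [NonUnitalNonAssocRing R] {Δ : R → R}
    (hΔ : IsJordanDerivation Δ) : Δ 0 = 0 :=
  (AddMonoidHom.mk' Δ hΔ.map_add).map_zero

section

variable {n : ℕ} {K : Type} [Ring K] {J : TwoSidedIdeal K}

/-- The `(s, t)` entry of `Δ (x e_{p,q})`. Indices are natural numbers so that index arithmetic
is plain `ℕ` arithmetic; the value is the junk `0` unless `q < p < n` and `s, t < n`. -/
def imageEntry (Δ : Rset n K J → Rset n K J) (p q : ℕ) (x : K) (s t : ℕ) : K :=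
  if h : q < p ∧ p < n ∧ s < n ∧ t < n then
    (Δ ⟨single ⟨p, h.2.1⟩ ⟨q, h.1.trans h.2.1⟩ x,
        stdBasis_mem_lower (Fin.mk_lt_mk.2 h.1) x⟩ : Matrix (Fin n) (Fin n) K)
      ⟨s, h.2.2.1⟩ ⟨t, h.2.2.2⟩
  else 0

variable {Δ : Rset n K J → Rset n K J}

theorem imageEntry_fin {p q : Fin n} (h : q < p) (x : K) (s t : Fin n) :
    imageEntry Δ p q x s t = (Δ ⟨single p q x, stdBasis_mem_lower h x⟩ :
      Matrix (Fin n) (Fin n) K) s t := by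
  rw [imageEntry, dif_pos ⟨h, p.2, s.2, t.2⟩]

theorem imageEntry_of_le_row {s : ℕ} (hs : n ≤ s) (p q : ℕ) (x : K) (t : ℕ) :
    imageEntry Δ p q x s t = 0 :=
  dif_neg fun h => by omega

theorem imageEntry_of_le_col {t : ℕ} (ht : n ≤ t) (p q : ℕ) (x : K) (s : ℕ) :
    imageEntry Δ p q x s t = 0 :=
  dif_neg fun h => by omega

theorem jordan_single_apply (hΔ : IsJordanDerivation Δ) {u v p q : Fin n} (hvu : v < u)
    (hqp : q < p) (x : K) {C : Rset n K J}
    (hC : (C : Matrix (Fin n) (Fin n) K) =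
      single u v x * single p q 1 + single p q 1 * single u v x) (s t : Fin n) :
    (Δ C : Matrix (Fin n) (Fin n) K) s t =
      (if t = q then imageEntry Δ u v x s p else 0) +
      (if s = p then imageEntry Δ u v x q t else 0) +
      (if s = u then x * imageEntry Δ p q 1 v t else 0) +
      (if t = v then imageEntry Δ p q 1 s u * x else 0) := by
  set A : Rset n K J := ⟨single u v x, stdBasis_mem_lower hvu x⟩
  set B : Rset n K J := ⟨single p q 1, stdBasis_mem_lower hqp 1⟩
  obtain rfl : C = A * B + B * A := Subtype.ext hC
  rw [hΔ.map_jordan]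
  simp only [imageEntry_fin hvu, imageEntry_fin hqp, AddMemClass.coe_add, MulMemClass.coe_mul,
    Matrix.add_apply, A, B]
  split_ifs <;> simp_all [mul_single_apply_of_ne, single_mul_apply_of_ne]

theorem imageEntry_orthogonal (hΔ : IsJordanDerivation Δ) (u v p q : ℕ) (hvu : v < u)
    (hqp : q < p) (hu : u < n) (hp : p < n) (hvp : v ≠ p) (hqu : q ≠ u) (x : K) (s t : ℕ) :
    (if t = q then imageEntry Δ u v x s p else 0) +
      (if s = p then imageEntry Δ u v x q t else 0) +
      (if s = u then x * imageEntry Δ p q 1 v t else 0) +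
      (if t = v then imageEntry Δ p q 1 s u * x else 0) = 0 := by
  rcases lt_or_ge s n with hs | hs
  · rcases lt_or_ge t n with ht | ht
    · have h := jordan_single_apply hΔ (u := ⟨u, hu⟩) (v := ⟨v, by omega⟩)
        (p := ⟨p, hp⟩) (q := ⟨q, by omega⟩) (Fin.mk_lt_mk.2 hvu) (Fin.mk_lt_mk.2 hqp) x
        (C := 0) ?_ ⟨s, hs⟩ ⟨t, ht⟩
      · simpa [Fin.ext_iff, hΔ.map_zero] using h.symm
      · rw [single_mul_single_of_ne (h := Fin.ne_of_val_ne hvp),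
          single_mul_single_of_ne (h := Fin.ne_of_val_ne hqu), add_zero]
        rfl
    · simp [imageEntry_of_le_col ht, show t ≠ q by omega, show t ≠ v by omega]
  · simp [imageEntry_of_le_row hs, show s ≠ p by omega, show s ≠ u by omega]

theorem imageEntry_jordan_factor (hΔ : IsJordanDerivation Δ) (p q m : ℕ) (hmq : m < q)
    (hqp : q < p) (hp : p < n) (x : K) (s t : ℕ) :
    imageEntry Δ p m x s t =
      (if t = q then imageEntry Δ q m x s p else 0) +
      (if s = p then imageEntry Δ q m x q t else 0) +
      (if s = q then x * imageEntry Δ p q 1 m t else 0) +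
      (if t = m then imageEntry Δ p q 1 s q * x else 0) := by
  rcases lt_or_ge s n with hs | hs
  · rcases lt_or_ge t n with ht | ht
    · have hmp : (⟨m, by omega⟩ : Fin n) < ⟨p, hp⟩ := Fin.mk_lt_mk.2 (hmq.trans hqp)
      have h := jordan_single_apply hΔ (u := ⟨q, by omega⟩) (v := ⟨m, by omega⟩)
        (p := ⟨p, hp⟩) (q := ⟨q, by omega⟩) (Fin.mk_lt_mk.2 hmq) (Fin.mk_lt_mk.2 hqp) x
        (C := ⟨single _ _ x, stdBasis_mem_lower hmp x⟩) ?_ ⟨s, hs⟩ ⟨t, ht⟩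
      · rw [show imageEntry Δ p m x s t = _ from imageEntry_fin hmp x ⟨s, hs⟩ ⟨t, ht⟩, h]
        simp [Fin.ext_iff]
      · rw [single_mul_single_of_ne (h := Fin.ne_of_val_ne (hmq.trans hqp).ne),
          single_mul_single_same, zero_add, one_mul]
    · simp [imageEntry_of_le_col ht, show t ≠ q by omega, show t ≠ m by omega]
  · simp [imageEntry_of_le_row hs, show s ≠ p by omega, show s ≠ q by omega]

theorem imageEntry_sub_col_succ (hΔ : IsJordanDerivation Δ) (htf : ∀ a : K, a + a = 0 → a = 0)
    (hsub : ∀ c s, imageEntry Δ (c + 1) c 1 s c = 0) (c s : ℕ) :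
    imageEntry Δ (c + 1) c 1 s (c + 1) = 0 := by
  rcases lt_or_ge (c + 1) n with hc | hc
  · have h := imageEntry_orthogonal hΔ (c + 1) c (c + 1) c (by omega) (by omega) hc hc (by omega)
      (by omega) 1 s c
    simp only [if_true, hsub, mul_zero, ite_self, mul_one, add_zero] at h
    exact htf _ h
  · exact imageEntry_of_le_col hc _ _ _ _

theorem imageEntry_one_zero_col_one_add (hΔ : IsJordanDerivation Δ)
    (htf : ∀ a : K, a + a = 0 → a = 0) (hsub : ∀ c s, imageEntry Δ (c + 1) c 1 s c = 0)
    (hn : 1 < n) (x : K) (s : ℕ) :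
    imageEntry Δ 1 0 x s 1 + (if s = 1 then imageEntry Δ 1 0 x 0 0 else 0) = 0 := by
  have h := imageEntry_orthogonal hΔ 1 0 1 0 one_pos one_pos hn hn zero_ne_one zero_ne_one x s 0
  have hD₀ : ∀ s, imageEntry Δ 1 0 1 s 0 = 0 := hsub 0
  have hD₁ : ∀ s, imageEntry Δ 1 0 1 s 1 = 0 := imageEntry_sub_col_succ hΔ htf hsub 0
  simpa [hD₀, hD₁] using h

theorem imageEntry_two_zero_one_col_one (hΔ : IsJordanDerivation Δ)
    (htf : ∀ a : K, a + a = 0 → a = 0) (hsub : ∀ c s, imageEntry Δ (c + 1) c 1 s c = 0)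
    (hn : 2 < n) (s : ℕ) :
    imageEntry Δ 2 0 1 s 1 = imageEntry Δ 1 0 1 s 2 := by
  have hD₁ : ∀ s, imageEntry Δ 1 0 1 s 1 = 0 := imageEntry_sub_col_succ hΔ htf hsub 0
  have hD₂ : ∀ s, imageEntry Δ 2 1 1 s 1 = 0 := hsub 1
  simp [imageEntry_jordan_factor hΔ 2 1 0 one_pos one_lt_two hn 1 s 1, hD₁, hD₂]

theorem imageEntry_one_zero_col_two_add (hΔ : IsJordanDerivation Δ)
    (htf : ∀ a : K, a + a = 0 → a = 0) (hsub : ∀ c s, imageEntry Δ (c + 1) c 1 s c = 0)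
    (hn : 2 < n) (y : K) (s : ℕ) :
    imageEntry Δ 1 0 y s 2 + (if s = 2 then imageEntry Δ 1 0 y 0 0 else 0) +
      imageEntry Δ 1 0 1 s 2 * y = 0 := by
  have h := imageEntry_orthogonal hΔ 1 0 2 0 one_pos two_pos (by omega) hn two_ne_zero.symm
    zero_ne_one y s 0
  have hN : imageEntry Δ 2 0 1 0 0 = 0 := by
    have hD₂ : ∀ s, imageEntry Δ 2 1 1 s 1 = 0 := hsub 1
    simp [imageEntry_jordan_factor hΔ 2 1 0 one_pos one_lt_two hn 1 0 0, hD₂]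
  simpa [hN, imageEntry_two_zero_one_col_one hΔ htf hsub hn] using h

theorem imageEntry_one_zero_one_col_two (hΔ : IsJordanDerivation Δ)
    (htf : ∀ a : K, a + a = 0 → a = 0) (hsub : ∀ c s, imageEntry Δ (c + 1) c 1 s c = 0)
    (hn : 2 < n) {s : ℕ} (hs : s ≠ 2) :
    imageEntry Δ 1 0 1 s 2 = 0 := by
  have h := imageEntry_one_zero_col_two_add hΔ htf hsub hn 1 s
  rw [if_neg hs, add_zero, mul_one] at h
  exact htf _ h

theorem imageEntry_one_zero_col_two (hΔ : IsJordanDerivation Δ)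
    (htf : ∀ a : K, a + a = 0 → a = 0) (hsub : ∀ c s, imageEntry Δ (c + 1) c 1 s c = 0)
    (hn : 2 < n) (x : K) {s : ℕ} (hs : s ≠ 2) :
    imageEntry Δ 1 0 x s 2 = 0 := by
  simpa [hs, imageEntry_one_zero_one_col_two hΔ htf hsub hn hs] using
    imageEntry_one_zero_col_two_add hΔ htf hsub hn x s

theorem imageEntry_two_zero_two_one (hΔ : IsJordanDerivation Δ) (hn : 2 < n) (x : K) :
    imageEntry Δ 2 0 x 2 1 = imageEntry Δ 1 0 x 2 2 + imageEntry Δ 1 0 x 1 1 := by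
  simp [imageEntry_jordan_factor hΔ 2 1 0 one_pos one_lt_two hn x 2 1]

theorem imageEntry_one_zero_zero_zero (hΔ : IsJordanDerivation Δ)
    (htf : ∀ a : K, a + a = 0 → a = 0) (hsub : ∀ c s, imageEntry Δ (c + 1) c 1 s c = 0)
    (hn : 2 < n) (x : K) :
    imageEntry Δ 1 0 x 0 0 = 0 := by
  have h₁ := imageEntry_one_zero_col_one_add hΔ htf hsub (by omega) x 1
  have h₂ := imageEntry_one_zero_col_two_add hΔ htf hsub hn x 2
  have h₃ := imageEntry_orthogonal hΔ 2 0 1 0 two_pos one_pos hn (by omega) zero_ne_one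
    two_ne_zero.symm x 2 0
  have hD₀ : ∀ s, imageEntry Δ 1 0 1 s 0 = 0 := hsub 0
  simp only [if_true, if_neg (by omega : (2 : ℕ) ≠ 1), hD₀, mul_zero, add_zero,
    imageEntry_two_zero_two_one hΔ hn] at h₁ h₂ h₃
  have h₁₁ : imageEntry Δ 1 0 x 1 1 = imageEntry Δ 1 0 x 0 0 :=
    add_left_cancel (add_right_cancel (h₃.trans h₂.symm))
  rw [h₁₁] at h₁
  exact htf _ h₁

theorem imageEntry_one_zero_col_one (hΔ : IsJordanDerivation Δ)
    (htf : ∀ a : K, a + a = 0 → a = 0) (hsub : ∀ c s, imageEntry Δ (c + 1) c 1 s c = 0)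
    (hn : 2 < n) (x : K) (s : ℕ) :
    imageEntry Δ 1 0 x s 1 = 0 := by
  simpa [imageEntry_one_zero_zero_zero hΔ htf hsub hn] using
    imageEntry_one_zero_col_one_add hΔ htf hsub (by omega) x s

theorem imageEntry_one_zero_two_two (hΔ : IsJordanDerivation Δ)
    (htf : ∀ a : K, a + a = 0 → a = 0) (hn : 3 < n) (x : K) :
    imageEntry Δ 1 0 x 2 2 = 0 := by
  -- `x e_{3,0}` is the Jordan product both of `x e_{1,0}` with `e_{3,1}`
  -- and of `x e_{2,0}` with `e_{3,2}`
  have h₁ : imageEntry Δ 3 0 x 3 1 = imageEntry Δ 1 0 x 3 3 + imageEntry Δ 1 0 x 1 1 := by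
    simp [imageEntry_jordan_factor hΔ 3 1 0 one_pos (by omega) hn x 3 1]
  have h₂ : imageEntry Δ 3 0 x 3 1 = imageEntry Δ 1 0 x 2 2 + imageEntry Δ 1 0 x 1 1 := by
    simp [imageEntry_jordan_factor hΔ 3 2 0 two_pos (by omega) hn x 3 1,
      imageEntry_two_zero_two_one hΔ (by omega) x]
  have h₃ := imageEntry_orthogonal hΔ 1 0 3 2 one_pos (by omega) (by omega) hn (by omega)
    (by omega) x 3 2
  simp only [if_true, if_neg (by omega : (3 : ℕ) ≠ 1), if_neg (by omega : (2 : ℕ) ≠ 0),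
    add_zero] at h₃
  rw [add_right_cancel (h₁.symm.trans h₂)] at h₃
  exact htf _ h₃

theorem imageEntry_one_zero_of_three_le_col (hΔ : IsJordanDerivation Δ)
    (htf : ∀ a : K, a + a = 0 → a = 0) (hn : 3 < n) (x : K) {s t : ℕ} (hs : s ≠ 1)
    (ht : 3 ≤ t) :
    imageEntry Δ 1 0 x s t = 0 := by
  rcases lt_or_ge t n with htn | htn
  · have h := imageEntry_orthogonal hΔ 1 0 t 2 one_pos (by omega) (by omega) htn (by omega)
      (by omega) x s 2
    simpa [hs, imageEntry_one_zero_two_two hΔ htf hn x] using h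
  · exact imageEntry_of_le_col htn _ _ _ _

theorem imageEntry_one_zero_row_one (hΔ : IsJordanDerivation Δ)
    (hsub : ∀ c s, imageEntry Δ (c + 1) c 1 s c = 0) (x : K) {t : ℕ} (ht : 3 ≤ t) :
    imageEntry Δ 1 0 x 1 t = 0 := by
  obtain ⟨c, rfl⟩ : ∃ c, t = c + 1 := ⟨t - 1, by omega⟩
  rcases lt_or_ge (c + 1) n with hcn | hcn
  · have h := imageEntry_orthogonal hΔ 1 0 (c + 1) c one_pos (by omega) (by omega) hcn (by omega)
      (by omega) x 1 c
    simpa [hsub c, show c ≠ 0 by omega] using h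
  · exact imageEntry_of_le_col hcn _ _ _ _

theorem imageEntry_one_zero_col_zero (hΔ : IsJordanDerivation Δ)
    (hsub : ∀ c s, imageEntry Δ (c + 1) c 1 s c = 0) (x : K) {s : ℕ} (hs : 2 ≤ s)
    (hsn : s + 1 < n) :
    imageEntry Δ 1 0 x s 0 = 0 := by
  have hs₀ : s ≠ 0 := by omega
  have hD : imageEntry Δ (s + 1) s 1 (s + 1) 1 = 0 := by
    have h := imageEntry_orthogonal hΔ (s + 1) s 1 0 (by omega) one_pos hsn (by omega) (by omega)
      (by omega) 1 (s + 1) 0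
    have hD₀ : ∀ s, imageEntry Δ 1 0 1 s 0 = 0 := hsub 0
    simpa [hD₀, hs₀, hs₀.symm] using h
  have h := imageEntry_orthogonal hΔ 1 0 (s + 1) s one_pos (by omega) (by omega) hsn (by omega)
    (by omega) x (s + 1) 0
  simpa [hD, hs₀, hs₀.symm] using h

theorem imageEntry_one_zero_eq_zero (hΔ : IsJordanDerivation Δ)
    (htf : ∀ a : K, a + a = 0 → a = 0) (hsub : ∀ c s, imageEntry Δ (c + 1) c 1 s c = 0)
    (hn : 3 < n) (x : K) {s t : ℕ} (hst : t ≠ 0 ∨ (s ≠ 1 ∧ s ≠ n - 1)) :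
    imageEntry Δ 1 0 x s t = 0 := by
  rcases (by omega : t = 0 ∨ t = 1 ∨ t = 2 ∨ 3 ≤ t) with rfl | rfl | rfl | ht
  · rcases (by omega : s = 0 ∨ (2 ≤ s ∧ s + 1 < n) ∨ n ≤ s) with rfl | ⟨hs, hsn⟩ | hs
    · exact imageEntry_one_zero_zero_zero hΔ htf hsub (by omega) x
    · exact imageEntry_one_zero_col_zero hΔ hsub x hs hsn
    · exact imageEntry_of_le_row hs _ _ _ _
  · exact imageEntry_one_zero_col_one hΔ htf hsub (by omega) x s
  · by_cases hs : s = 2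
    · subst hs
      exact imageEntry_one_zero_two_two hΔ htf hn x
    · exact imageEntry_one_zero_col_two hΔ htf hsub (by omega) x hs
  · by_cases hs : s = 1
    · subst hs
      exact imageEntry_one_zero_row_one hΔ hsub x ht
    · exact imageEntry_one_zero_of_three_le_col hΔ htf hn x hs ht

theorem imageEntry_succ_zero_row (hΔ : IsJordanDerivation Δ)
    (hsub : ∀ c s, imageEntry Δ (c + 1) c 1 s c = 0) {k : ℕ} (hk : 1 ≤ k) (hkn : k + 1 < n)
    (x : K) {t : ℕ} (ht : t ≠ k) :
    imageEntry Δ (k + 1) 0 x k t = x * imageEntry Δ (k + 1) k 1 0 t := by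
  simp [imageEntry_jordan_factor hΔ (k + 1) k 0 hk (by omega) hkn x k t, ht, hsub k]

theorem mul_imageEntry_sub_row_zero (hΔ : IsJordanDerivation Δ)
    (htf : ∀ a : K, a + a = 0 → a = 0) (hsub : ∀ c s, imageEntry Δ (c + 1) c 1 s c = 0)
    {k : ℕ} (hk : 1 ≤ k) (hkn : k + 2 < n) (x : K) (t : ℕ) :
    x * imageEntry Δ (k + 1) k 1 0 t = 0 := by
  rcases (by omega : t = k ∨ t = 0 ∨ (t ≠ k ∧ t ≠ 0)) with rfl | rfl | ⟨htk, ht₀⟩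
  · rw [hsub, mul_zero]
  · have h := imageEntry_orthogonal hΔ (k + 1) 0 (k + 1) k (by omega) (by omega) (by omega)
      (by omega) (by omega) (by omega) x (k + 1) 0
    simp only [if_true, if_neg (by omega : 0 ≠ k), imageEntry_sub_col_succ hΔ htf hsub,
      zero_mul, zero_add, add_zero,
      imageEntry_succ_zero_row hΔ hsub hk (by omega) x (by omega : 0 ≠ k)] at h
    exact htf _ h
  · have h := imageEntry_orthogonal hΔ (k + 1) 0 (k + 2) k (by omega) (by omega) (by omega) hkn
      (by omega) (by omega) x (k + 2) t
    simpa [htk, ht₀, imageEntry_succ_zero_row hΔ hsub hk (by omega) x htk] using h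

theorem imageEntry_succ_zero_eq_zero (hΔ : IsJordanDerivation Δ)
    (htf : ∀ a : K, a + a = 0 → a = 0) (hsub : ∀ c s, imageEntry Δ (c + 1) c 1 s c = 0)
    {k : ℕ} (hk : 1 ≤ k) (hkn : k + 2 < n)
    (ih : ∀ x s t, t ≠ 0 ∨ (s ≠ k ∧ s ≠ n - 1) → imageEntry Δ k 0 x s t = 0)
    (x : K) {s t : ℕ} (hst : t ≠ 0 ∨ (s ≠ k + 1 ∧ s ≠ n - 1)) :
    imageEntry Δ (k + 1) 0 x s t = 0 := by
  rw [imageEntry_jordan_factor hΔ (k + 1) k 0 hk (by omega) (by omega) x s t,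
    ih x s (k + 1) (Or.inl (by omega)), hsub, mul_imageEntry_sub_row_zero hΔ htf hsub hk hkn]
  by_cases hs : s = k + 1
  · simp [hs, ih x k t (by omega)]
  · simp [hs]

theorem imageEntry_first_col_eq_zero (hΔ : IsJordanDerivation Δ)
    (htf : ∀ a : K, a + a = 0 → a = 0) (hsub : ∀ c s, imageEntry Δ (c + 1) c 1 s c = 0)
    (hn : 3 < n) {r : ℕ} (hr : 1 ≤ r) (hrn : r + 2 ≤ n) (x : K) {s t : ℕ}
    (hst : t ≠ 0 ∨ (s ≠ r ∧ s ≠ n - 1)) :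
    imageEntry Δ r 0 x s t = 0 := by
  induction r, hr using Nat.le_induction generalizing x s t with
  | base => exact imageEntry_one_zero_eq_zero hΔ htf hsub hn x hst
  | succ k hk ih =>
    exact imageEntry_succ_zero_eq_zero hΔ htf hsub hk (by omega)
      (fun x s t hst => ih (by omega) x hst) x hst

end

/-- under the column-vanishing hypotheses, `Δ(x e_{i,1})` is supported on
positions `(i,1)` and `(n,1)` for `1 < i < n` (one-based); here `r` is the zero-based row. -/
theorem image_first_column (n : ℕ) (hn : 4 ≤ n) (K : Type) [Ring K]
    (htf : ∀ a : K, a + a = 0 → a = 0) (J : TwoSidedIdeal K)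
    (Δ : ↥(Rset n K J) → ↥(Rset n K J))
    (hadd : ∀ a b : ↥(Rset n K J), Δ (a + b) = Δ a + Δ b)
    (hjord : ∀ a b : ↥(Rset n K J),
      Δ (a * b + b * a) = Δ a * b + b * Δ a + a * Δ b + Δ b * a)
    (hcol : ∀ (c : Fin n) (hc : (c : ℕ) + 1 < n), ∀ s : Fin n,
      (↑(Δ ⟨Matrix.single (⟨(c : ℕ) + 1, hc⟩ : Fin n) c (1 : K),
          stdBasis_mem_lower (by simp only [Fin.lt_def]; omega) 1⟩) :
        Matrix (Fin n) (Fin n) K) s c = 0) :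
    ∀ (r : Fin n) (hr1 : 0 < (r : ℕ)) (hr2 : (r : ℕ) < n - 1) (x : K),
      (↑(Δ ⟨Matrix.single r (⟨0, by omega⟩ : Fin n) x,
          stdBasis_mem_lower (by simp only [Fin.lt_def]; omega) x⟩) :
        Matrix (Fin n) (Fin n) K) =
      Matrix.single r (⟨0, by omega⟩ : Fin n)
        ((↑(Δ ⟨Matrix.single r (⟨0, by omega⟩ : Fin n) x,
            stdBasis_mem_lower (by simp only [Fin.lt_def]; omega) x⟩) :
          Matrix (Fin n) (Fin n) K) r ⟨0, by omega⟩) +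
      Matrix.single (⟨n - 1, by omega⟩ : Fin n) (⟨0, by omega⟩ : Fin n)
        ((↑(Δ ⟨Matrix.single r (⟨0, by omega⟩ : Fin n) x,
            stdBasis_mem_lower (by simp only [Fin.lt_def]; omega) x⟩) :
          Matrix (Fin n) (Fin n) K) ⟨n - 1, by omega⟩ ⟨0, by omega⟩) := by
  intro r hr₁ hr₂ x
  have hΔ : IsJordanDerivation Δ := ⟨hadd, hjord⟩
  have hsub : ∀ c s, imageEntry Δ (c + 1) c 1 s c = 0 := by
    intro c s
    unfold imageEntry
    split_ifs with h
    · exact hcol ⟨c, by omega⟩ h.2.1 ⟨s, h.2.2.1⟩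
    · rfl
  have h0r : (⟨0, by omega⟩ : Fin n) < r := Fin.mk_lt_mk.2 hr₁
  ext s t
  simp only [← imageEntry_fin h0r, Matrix.add_apply, single_apply, Fin.ext_iff]
  split_ifs with h₁ h₂ h₂
  · omega
  · rw [h₁.1, h₁.2, add_zero]
  · rw [h₂.1, h₂.2, zero_add]
  · rw [add_zero]
    exact imageEntry_first_col_eq_zero hΔ htf hsub (by omega) hr₁ (by omega) x (by omega)
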